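/- Let ω ⊂ ℝ^d be a bounded domain, χ ∈ W^{1,∞}(ω) with 0 ≤ χ ≤ 1, and let (u, p) ∈ (H¹(ω))^d × L²₀(ω) satisfy the homogeneous Brinkman equation ∇p − Δu + κ⁻¹u = 0 in ω (weakly, tested against functions in (H¹₀(ω))^d). If χ vanishes on ∂ω, then ∫_ω χ²|∇u|² + ∫_ω κ⁻¹χ²|u|² ≤ C ( ∫_ω |∇χ|²|u|² + ∫_ω κ⁻²|u|² + ∫_ω |div u|² + ‖p‖²_{L²(ω)} ) with C an absolute constant. -/

import Mathlib

open MeasureTheory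

noncomputable def ediv {d : ℕ} (u : EuclideanSpace ℝ (Fin d) → EuclideanSpace ℝ (Fin d))
    (x : EuclideanSpace ℝ (Fin d)) : ℝ :=
  ∑ i, fderiv ℝ u x (EuclideanSpace.single i 1) i

noncomputable def gradSq {d : ℕ} (u : EuclideanSpace ℝ (Fin d) → EuclideanSpace ℝ (Fin d))
    (x : EuclideanSpace ℝ (Fin d)) : ℝ :=
  ∑ i, ‖fderiv ℝ u x (EuclideanSpace.single i 1)‖ ^ 2

noncomputable def gradInner {d : ℕ} (u v : EuclideanSpace ℝ (Fin d) → EuclideanSpace ℝ (Fin d))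
    (x : EuclideanSpace ℝ (Fin d)) : ℝ :=
  ∑ i, (inner ℝ (fderiv ℝ u x (EuclideanSpace.single i 1)) (fderiv ℝ v x (EuclideanSpace.single i 1)) : ℝ)

/-!
By the product rule, `∇(χ²u) = χ²∇u + 2χ u ⊗ ∇χ` and `div(χ²u) = χ² div u + 2χ ∇χ·u`, so the
right-hand side of the tested equation is `∫ χ²|∇u|² + ∫ κ⁻¹χ²|u|²` plus the cross term
`2 ∫ χ Σᵢ ∂ᵢχ ⟨∂ᵢu, u⟩`. Cauchy–Schwarz and Young's inequality bound the cross term by half of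
`∫ χ²|∇u|²` plus `2 ∫ |∇χ|²|u|²`, and, since `0 ≤ χ ≤ 1`, the pressure side by
`‖p‖²/2 + ∫ |div u|² + 4 ∫ |∇χ|²|u|²`. Absorbing the gradient term gives the estimate with `C = 12`.
-/

lemma sq_sum_mul_le_norm_sq_mul {ι : Type*} [Fintype ι] (v : EuclideanSpace ℝ ι) (a : ι → ℝ) :
    (∑ i, v i * a i) ^ 2 ≤ ‖v‖ ^ 2 * ∑ i, a i ^ 2 := by
  simpa only [EuclideanSpace.norm_sq_eq, Real.norm_eq_abs, sq_abs]
    using Finset.sum_mul_sq_le_sq_mul_sq Finset.univ (fun i => v i) a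

lemma real_inner_sq_le_norm_sq_mul_norm_sq {F : Type*} [SeminormedAddCommGroup F]
    [InnerProductSpace ℝ F] (a b : F) : inner ℝ a b ^ 2 ≤ ‖a‖ ^ 2 * ‖b‖ ^ 2 := by
  rw [← mul_pow, ← sq_abs]
  exact pow_le_pow_left₀ (abs_nonneg _) (abs_real_inner_le_norm a b) 2

lemma two_mul_abs_le_of_sq_le_mul {t a b : ℝ} (ha : 0 ≤ a) (hb : 0 ≤ b) (h : t ^ 2 ≤ a * b) :
    2 * |t| ≤ a / 2 + 2 * b := by
  rw [← abs_two, ← abs_mul]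
  exact abs_le_of_sq_le_sq (by nlinarith [sq_nonneg (a / 2 - 2 * b)]) (by positivity)

lemma integral_le_of_le_of_nonneg {α : Type*} [MeasurableSpace α] {μ : Measure α} {f g : α → ℝ}
    (hg : Integrable g μ) (hg0 : 0 ≤ g) (hfg : f ≤ g) : ∫ x, f x ∂μ ≤ ∫ x, g x ∂μ := by
  by_cases hf : Integrable f μ
  · exact integral_mono hf hg hfg
  · rw [integral_undef hf]
    exact integral_nonneg hg0

section Brinkman

variable {d : ℕ} {χ : EuclideanSpace ℝ (Fin d) → ℝ}
  {u : EuclideanSpace ℝ (Fin d) → EuclideanSpace ℝ (Fin d)}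

lemma gradSq_nonneg (u : EuclideanSpace ℝ (Fin d) → EuclideanSpace ℝ (Fin d))
    (x : EuclideanSpace ℝ (Fin d)) : 0 ≤ gradSq u x :=
  Finset.sum_nonneg fun _ _ => sq_nonneg _

lemma measurable_gradInner (u v : EuclideanSpace ℝ (Fin d) → EuclideanSpace ℝ (Fin d)) :
    Measurable (gradInner u v) :=
  Finset.measurable_sum _ fun _ _ =>
    (measurable_fderiv_apply_const ℝ u _).inner (measurable_fderiv_apply_const ℝ v _)

lemma gradient_apply_eq_fderiv_single (χ : EuclideanSpace ℝ (Fin d) → ℝ)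
    (x : EuclideanSpace ℝ (Fin d)) (i : Fin d) :
    gradient χ x i = fderiv ℝ χ x (EuclideanSpace.single i 1) := by
  rw [← InnerProductSpace.toDual_symm_apply (x := EuclideanSpace.single i (1 : ℝ)), ← gradient,
    EuclideanSpace.inner_single_right, conj_trivial, one_mul]

lemma fderiv_sq_smul_apply (hχ : Differentiable ℝ χ) (hu : Differentiable ℝ u)
    (x v : EuclideanSpace ℝ (Fin d)) :
    fderiv ℝ (fun y => χ y ^ 2 • u y) x v
      = (2 * χ x * fderiv ℝ χ x v) • u x + χ x ^ 2 • fderiv ℝ u x v := by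
  rw [fderiv_fun_smul (c := fun y => χ y ^ 2) ((hχ x).pow 2) (hu x), fderiv_fun_pow 2 (hχ x),
    add_apply, smul_apply, ContinuousLinearMap.smulRight_apply, add_comm]
  norm_num [smul_eq_mul]

lemma ediv_sq_smul (hχ : Differentiable ℝ χ) (hu : Differentiable ℝ u)
    (x : EuclideanSpace ℝ (Fin d)) :
    ediv (fun y => χ y ^ 2 • u y) x
      = χ x ^ 2 * ediv u x + 2 * χ x * inner ℝ (gradient χ x) (u x) := by
  simp only [ediv, fderiv_sq_smul_apply hχ hu, PiLp.add_apply, PiLp.smul_apply, smul_eq_mul,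
    Finset.sum_add_distrib, Finset.mul_sum, PiLp.inner_apply, gradient_apply_eq_fderiv_single,
    Real.inner_apply, mul_assoc]
  exact add_comm _ _

lemma gradInner_sq_smul (hχ : Differentiable ℝ χ) (hu : Differentiable ℝ u)
    (x : EuclideanSpace ℝ (Fin d)) :
    gradInner u (fun y => χ y ^ 2 • u y) x
      = χ x ^ 2 * gradSq u x
        + 2 * χ x * ∑ i, gradient χ x i
            * inner ℝ (fderiv ℝ u x (EuclideanSpace.single i 1)) (u x) := by
  simp only [gradInner, fderiv_sq_smul_apply hχ hu, inner_add_right, real_inner_smul_right,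
    real_inner_self_eq_norm_sq, gradSq, Finset.sum_add_distrib, Finset.mul_sum,
    gradient_apply_eq_fderiv_single, mul_assoc]
  exact add_comm _ _

lemma sq_sum_gradient_mul_inner_le (χ : EuclideanSpace ℝ (Fin d) → ℝ)
    (u : EuclideanSpace ℝ (Fin d) → EuclideanSpace ℝ (Fin d)) (x : EuclideanSpace ℝ (Fin d)) :
    (∑ i, gradient χ x i * inner ℝ (fderiv ℝ u x (EuclideanSpace.single i 1)) (u x)) ^ 2
      ≤ ‖gradient χ x‖ ^ 2 * (gradSq u x * ‖u x‖ ^ 2) :=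
  calc _ ≤ ‖gradient χ x‖ ^ 2
          * ∑ i, inner ℝ (fderiv ℝ u x (EuclideanSpace.single i 1)) (u x) ^ 2 :=
        sq_sum_mul_le_norm_sq_mul _ _
    _ ≤ ‖gradient χ x‖ ^ 2 * ∑ i, ‖fderiv ℝ u x (EuclideanSpace.single i 1)‖ ^ 2 * ‖u x‖ ^ 2 := by
        gcongr with i
        exact real_inner_sq_le_norm_sq_mul_norm_sq _ _
    _ = ‖gradient χ x‖ ^ 2 * (gradSq u x * ‖u x‖ ^ 2) := by rw [gradSq, Finset.sum_mul]

lemma abs_gradInner_sq_smul_sub_le (hχ : Differentiable ℝ χ) (hu : Differentiable ℝ u)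
    (x : EuclideanSpace ℝ (Fin d)) :
    |gradInner u (fun y => χ y ^ 2 • u y) x - χ x ^ 2 * gradSq u x|
      ≤ χ x ^ 2 * gradSq u x / 2 + 2 * (‖gradient χ x‖ ^ 2 * ‖u x‖ ^ 2) := by
  rw [gradInner_sq_smul hχ hu, add_sub_cancel_left, mul_assoc, abs_mul, abs_two]
  refine two_mul_abs_le_of_sq_le_mul (mul_nonneg (sq_nonneg _) (gradSq_nonneg u x))
    (by positivity) ?_
  calc _ ≤ χ x ^ 2 * (‖gradient χ x‖ ^ 2 * (gradSq u x * ‖u x‖ ^ 2)) := by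
        rw [mul_pow]
        exact mul_le_mul_of_nonneg_left (sq_sum_gradient_mul_inner_le χ u x) (sq_nonneg _)
    _ = _ := by ring

lemma sq_ediv_sq_smul_le (hχ : Differentiable ℝ χ) (hu : Differentiable ℝ u)
    {x : EuclideanSpace ℝ (Fin d)} (hχ0 : 0 ≤ χ x) (hχ1 : χ x ≤ 1) :
    ediv (fun y => χ y ^ 2 • u y) x ^ 2
      ≤ 2 * ediv u x ^ 2 + 8 * (‖gradient χ x‖ ^ 2 * ‖u x‖ ^ 2) := by
  have hS := real_inner_sq_le_norm_sq_mul_norm_sq (gradient χ x) (u x)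
  have hχ2 : χ x ^ 2 ≤ 1 := pow_le_one₀ hχ0 hχ1
  have hχ4 : (χ x ^ 2) ^ 2 ≤ 1 := pow_le_one₀ (sq_nonneg _) hχ2
  rw [ediv_sq_smul hχ hu]
  nlinarith [sq_nonneg (χ x ^ 2 * ediv u x - 2 * χ x * inner ℝ (gradient χ x) (u x)),
    mul_nonneg (sub_nonneg.2 hχ4) (sq_nonneg (ediv u x)),
    mul_nonneg (sub_nonneg.2 hχ2) (sq_nonneg (inner ℝ (gradient χ x) (u x)))]

variable (μ : Measure (EuclideanSpace ℝ (Fin d)))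

lemma integral_gradInner_sq_smul_ge (hχ : Differentiable ℝ χ) (hu : Differentiable ℝ u)
    (hA : Integrable (fun x => χ x ^ 2 * gradSq u x) μ)
    (hG : Integrable (fun x => ‖gradient χ x‖ ^ 2 * ‖u x‖ ^ 2) μ) :
    (∫ x, χ x ^ 2 * gradSq u x ∂μ) / 2 - 2 * ∫ x, ‖gradient χ x‖ ^ 2 * ‖u x‖ ^ 2 ∂μ
      ≤ ∫ x, gradInner u (fun y => χ y ^ 2 • u y) x ∂μ := by
  have hbound := abs_gradInner_sq_smul_sub_le hχ hu
  have hA0 x : 0 ≤ χ x ^ 2 * gradSq u x := mul_nonneg (sq_nonneg _) (gradSq_nonneg u x)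
  have hint : Integrable (gradInner u (fun y => χ y ^ 2 • u y)) μ := by
    refine (hA.add ((hA.div_const 2).add (hG.const_mul 2))).mono'
      (measurable_gradInner _ _).aestronglyMeasurable (ae_of_all _ fun x => ?_)
    rw [Real.norm_eq_abs, Pi.add_apply, Pi.add_apply]
    linarith [abs_sub_abs_le_abs_sub (gradInner u (fun y => χ y ^ 2 • u y) x)
      (χ x ^ 2 * gradSq u x), abs_of_nonneg (hA0 x), hbound x]
  rw [← integral_div, ← integral_const_mul, ← integral_sub (hA.div_const 2) (hG.const_mul 2)]
  exact integral_mono ((hA.div_const 2).sub (hG.const_mul 2)) hint fun x => by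
    linarith [(abs_le.1 (hbound x)).1]

lemma integral_mul_ediv_sq_smul_le (hχ : Differentiable ℝ χ) (hu : Differentiable ℝ u)
    (hχ01 : ∀ x, 0 ≤ χ x ∧ χ x ≤ 1) {p : EuclideanSpace ℝ (Fin d) → ℝ}
    (hP : Integrable (fun x => p x ^ 2) μ) (hD : Integrable (fun x => ediv u x ^ 2) μ)
    (hG : Integrable (fun x => ‖gradient χ x‖ ^ 2 * ‖u x‖ ^ 2) μ) :
    ∫ x, p x * ediv (fun y => χ y ^ 2 • u y) x ∂μ
      ≤ (∫ x, p x ^ 2 ∂μ) / 2 + ∫ x, ediv u x ^ 2 ∂μ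
        + 4 * ∫ x, ‖gradient χ x‖ ^ 2 * ‖u x‖ ^ 2 ∂μ := by
  -- `p` is not assumed measurable, so the left-hand integral may be the junk value `0`.
  have hPD : Integrable (fun x => p x ^ 2 / 2 + ediv u x ^ 2) μ := (hP.div_const 2).add hD
  rw [← integral_div, ← integral_const_mul, ← integral_add (hP.div_const 2) hD,
    ← integral_add hPD (hG.const_mul 4)]
  refine integral_le_of_le_of_nonneg (hPD.add (hG.const_mul 4)) (fun x => by positivity)
    fun x => ?_
  have hq := sq_ediv_sq_smul_le hχ hu (hχ01 x).1 (hχ01 x).2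
  linarith [two_mul_le_add_sq (p x) (ediv (fun y => χ y ^ 2 • u y) x)]

end Brinkman

/-- Lemma 5.3: Caccioppoli-type inequality. If `(u, p)` satisfies the
homogeneous Brinkman equation weakly on `ω` (here recorded in the tested form with the
test function `φ = χ²u ∈ (H¹₀(ω))ᵈ`, which is admissible since `χ` vanishes on `∂ω`),
`χ ∈ W^{1,∞}(ω)` with `0 ≤ χ ≤ 1`, then
`∫ χ²|∇u|² + ∫ κ⁻¹χ²|u|² ≤ C (∫ |∇χ|²|u|² + ∫ κ⁻²|u|² + ∫ |div u|² + ‖p‖²)`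
with an absolute constant `C`. -/
theorem caccioppoli_brinkman :
    ∃ C : ℝ, 0 < C ∧
      ∀ (d : ℕ) (ω : Set (EuclideanSpace ℝ (Fin d)))
        (χ : EuclideanSpace ℝ (Fin d) → ℝ)
        (u : EuclideanSpace ℝ (Fin d) → EuclideanSpace ℝ (Fin d))
        (p κinv : EuclideanSpace ℝ (Fin d) → ℝ),
        MeasurableSet ω → Bornology.IsBounded ω →
        Differentiable ℝ χ → (∀ x, 0 ≤ χ x ∧ χ x ≤ 1) →
        (∀ x ∈ frontier ω, χ x = 0) →
        Differentiable ℝ u →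
        (∀ x ∈ ω, 0 ≤ κinv x) →
        -- p ∈ L²₀(ω)
        (∫ x in ω, p x) = 0 →
        -- weak homogeneous Brinkman equation tested with φ = χ²u:
        -- ⟨p, div(χ²u)⟩ = ⟨∇u, ∇(χ²u)⟩ + ⟨κ⁻¹u, χ²u⟩
        ((∫ x in ω, p x * ediv (fun y => (χ y) ^ 2 • u y) x)
          = (∫ x in ω, gradInner u (fun y => (χ y) ^ 2 • u y) x)
            + ∫ x in ω, κinv x * (inner ℝ (u x) ((χ x) ^ 2 • u x) : ℝ)) →
        -- integrability of the quantities involved (u ∈ H¹, p ∈ L², χ ∈ W^{1,∞})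
        IntegrableOn (fun x => (χ x) ^ 2 * gradSq u x) ω →
        IntegrableOn (fun x => κinv x * (χ x) ^ 2 * ‖u x‖ ^ 2) ω →
        IntegrableOn (fun x => ‖gradient χ x‖ ^ 2 * ‖u x‖ ^ 2) ω →
        IntegrableOn (fun x => (κinv x) ^ 2 * ‖u x‖ ^ 2) ω →
        IntegrableOn (fun x => (ediv u x) ^ 2) ω →
        IntegrableOn (fun x => (p x) ^ 2) ω →
        (∫ x in ω, (χ x) ^ 2 * gradSq u x) + (∫ x in ω, κinv x * (χ x) ^ 2 * ‖u x‖ ^ 2)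
          ≤ C * ((∫ x in ω, ‖gradient χ x‖ ^ 2 * ‖u x‖ ^ 2)
              + (∫ x in ω, (κinv x) ^ 2 * ‖u x‖ ^ 2)
              + (∫ x in ω, (ediv u x) ^ 2)
              + ∫ x in ω, (p x) ^ 2) := by
  refine ⟨12, by norm_num, ?_⟩
  intro d ω χ u p κinv hω _ hχ hχ01 _ hu hκ _ hweak hA _ hG _ hD hP
  have hgrad := integral_gradInner_sq_smul_ge _ hχ hu hA hG
  have hpres := integral_mul_ediv_sq_smul_le _ hχ hu hχ01 hP hD hG
  have hreaction : ∫ x in ω, κinv x * inner ℝ (u x) (χ x ^ 2 • u x)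
      = ∫ x in ω, κinv x * χ x ^ 2 * ‖u x‖ ^ 2 := by
    simp only [real_inner_smul_right, real_inner_self_eq_norm_sq, mul_assoc]
  have hreaction_nonneg : 0 ≤ ∫ x in ω, κinv x * χ x ^ 2 * ‖u x‖ ^ 2 :=
    setIntegral_nonneg hω fun x hx => by have := hκ x hx; positivity
  have hG0 : 0 ≤ ∫ x in ω, ‖gradient χ x‖ ^ 2 * ‖u x‖ ^ 2 := integral_nonneg fun _ => by positivity
  have hK0 : 0 ≤ ∫ x in ω, κinv x ^ 2 * ‖u x‖ ^ 2 := integral_nonneg fun _ => by positivity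
  have hD0 : 0 ≤ ∫ x in ω, ediv u x ^ 2 := integral_nonneg fun _ => by positivity
  have hP0 : 0 ≤ ∫ x in ω, p x ^ 2 := integral_nonneg fun _ => by positivity
  linarith
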